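/- Let N, k, d be integers with N > k ≥ 1 and d ≥ 2. Then for all sufficiently small ε ∈ ℂ, F_{d−1}(ε) := (2πi)^{−2} ∮_{C_{d−1, (d−1+ε)z_d/(d+ε)}} dz_{d−1} ∮_{C_d} dz_d/z_d^N · [ z_{d−1}^{(N−k)−1} / ( z_{d−1} − (d−1+ε)z_d/(d+ε) ) ] · e^k(z_{d−1}, z_d)/(k z_{d−1}) equals (d−1+ε)^{(N−k)−1} · (d+ε) · ∏_{r=(d−1)k+1}^{kd}(r+kε) / (d+ε)^N. -/

import Mathlib

open Complex Finset

/-- `e^k(z,w) := ∏_{j=0}^{k} ((k-j)z + jw)`. -/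
noncomputable def ek (k : ℕ) (z w : ℂ) : ℂ :=
  ∏ j ∈ Finset.range (k + 1), (((k : ℂ) - (j : ℂ)) * z + (j : ℂ) * w)

/-- The residue of `f` at `c`: the limit, as the radius tends to `0` from above, of
`(2πi)⁻¹` times the integral of `f` over the circle of radius `R` centered at `c`
(i.e. the common value of these integrals for all sufficiently small radii). -/
noncomputable def resAt (f : ℂ → ℂ) (c : ℂ) : ℂ :=
  Filter.limUnder (nhdsWithin (0 : ℝ) (Set.Ioi 0)) fun R : ℝ =>
    (2 * (Real.pi : ℂ) * Complex.I)⁻¹ * ∮ z in C(c, R), f z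

/-- `F_{d-1}(ε) := (2πi)^{-2} ∮_{C_{d-1,(d-1+ε)z_d/(d+ε)}} dz_{d-1} ∮_{C_d} dz_d/z_d^N ·
[z_{d-1}^{(N-k)-1}/(z_{d-1} - (d-1+ε)z_d/(d+ε))] · e^k(z_{d-1},z_d)/(k z_{d-1})`:
the `z_{d-1}`-integration (performed first) is the residue at the moving pole
`z_{d-1} = (d-1+ε)z_d/(d+ε)`, and the `z_d`-integration is the residue at `z_d = 0`. -/
noncomputable def Fdm1 (N k d : ℕ) (ε : ℂ) : ℂ :=
  resAt
    (fun zd =>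
      zd ^ (-(N : ℤ)) *
        resAt
          (fun zdm1 =>
            zdm1 ^ ((N : ℤ) - (k : ℤ) - 1) /
                (zdm1 - ((d : ℂ) - 1 + ε) * zd / ((d : ℂ) + ε)) *
              (ek k zdm1 zd / ((k : ℂ) * zdm1)))
          (((d : ℂ) - 1 + ε) * zd / ((d : ℂ) + ε)))
    0

lemma resAt_eq (h : ℂ → ℂ) (hh : Differentiable ℂ h) (g : ℂ → ℂ) (c : ℂ)
    (hg : ∀ z : ℂ, z ≠ 0 → g z = h z / (z - c)) : resAt g c = h c := by
  have key : ∀ᶠ R in nhdsWithin (0:ℝ) (Set.Ioi 0),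
      (2 * (Real.pi:ℂ) * Complex.I)⁻¹ * (∮ z in C(c, R), g z) = h c := by
    have h1 : ∀ᶠ R in nhdsWithin (0:ℝ) (Set.Ioi 0), 0 < R :=
      eventually_mem_nhdsWithin
    have h2 : ∀ᶠ R in nhdsWithin (0:ℝ) (Set.Ioi 0), c ≠ 0 → R < ‖c‖ := by
      rcases eq_or_ne c 0 with hc | hc
      · exact Filter.Eventually.of_forall fun _ h => absurd hc h
      · have h3 : ∀ᶠ R in nhds (0:ℝ), R < ‖c‖ :=
          Filter.tendsto_id.eventually_lt_const (norm_pos_iff.mpr hc)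
        exact (h3.filter_mono nhdsWithin_le_nhds).mono fun R hR _ => hR
    filter_upwards [h1, h2] with R hR hRc
    have hsph : ∀ z ∈ Metric.sphere c R, z ≠ 0 := by
      intro z hz hz0
      subst hz0
      rw [mem_sphere_iff_norm, zero_sub, norm_neg] at hz
      rcases eq_or_ne c 0 with hc | hc
      · rw [hc, norm_zero] at hz; linarith
      · linarith [hRc hc]
    have hcongr : (∮ z in C(c, R), g z) = ∮ z in C(c, R), (z - c)⁻¹ • h z := by
      refine circleIntegral.integral_congr hR.le fun z hz => ?_
      rw [hg z (hsph z hz), smul_eq_mul, div_eq_inv_mul]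
    rw [hcongr, DiffContOnCl.circleIntegral_sub_inv_smul
      hh.diffContOnCl (Metric.mem_ball_self hR)]
    rw [smul_eq_mul, inv_mul_cancel_left₀ two_pi_I_ne_zero]
  have key' : (fun R : ℝ => (2 * (Real.pi:ℂ) * Complex.I)⁻¹ * ∮ z in C(c, R), g z)
      =ᶠ[nhdsWithin (0:ℝ) (Set.Ioi 0)] fun _ => h c := key
  exact (tendsto_const_nhds.congr' key'.symm).limUnder_eq

lemma inner_eval (N k : ℕ) (hk : 1 ≤ k) (hkN : k < N) (zd c : ℂ) :
    resAt (fun z => z ^ ((N:ℤ) - (k:ℤ) - 1) / (z - c) * (ek k z zd / ((k:ℂ) * z))) c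
      = c ^ (N - k - 1) *
        ∏ j ∈ Finset.range k, (((k:ℂ) - ((j:ℂ)+1)) * c + ((j:ℂ)+1) * zd) := by
  have hQ : ∀ z : ℂ, ek k z zd =
      (∏ j ∈ Finset.range k, (((k:ℂ) - ((j:ℂ)+1)) * z + ((j:ℂ)+1) * zd)) * ((k:ℂ) * z) := by
    intro z
    rw [ek, Finset.prod_range_succ']
    congr 1
    · exact Finset.prod_congr rfl fun j _ => by push_cast; ring
    · push_cast; ring
  refine resAt_eq
    (fun z => z ^ (N - k - 1) *
      ∏ j ∈ Finset.range k, (((k:ℂ) - ((j:ℂ)+1)) * z + ((j:ℂ)+1) * zd)) ?_ _ _ ?_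
  · exact (differentiable_pow _).mul (Differentiable.fun_finsetProd fun j _ =>
      ((differentiable_const _).mul differentiable_fun_id).add (differentiable_const _))
  · intro z hz
    have hkz : (k:ℂ) * z ≠ 0 := mul_ne_zero (Nat.cast_ne_zero.mpr (by omega)) hz
    rw [hQ, mul_div_cancel_right₀ _ hkz,
      show ((N:ℤ) - (k:ℤ) - 1) = ((N - k - 1 : ℕ) : ℤ) from by omega,
      zpow_natCast, div_mul_eq_mul_div]

/-- For `N > k ≥ 1`, `d ≥ 2` and all sufficiently small `ε`:
`F_{d-1}(ε) = (d-1+ε)^{(N-k)-1} (d+ε) ∏_{r=(d-1)k+1}^{kd}(r+kε) / (d+ε)^N`. -/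
theorem stmt8 (N k d : ℕ) (hk : 1 ≤ k) (hkN : k < N) (hd : 2 ≤ d) :
    ∃ δ > (0 : ℝ), ∀ ε : ℂ, ‖ε‖ < δ →
      Fdm1 N k d ε =
        ((d : ℂ) - 1 + ε) ^ ((N : ℤ) - (k : ℤ) - 1) * ((d : ℂ) + ε) *
          (∏ s ∈ Finset.Icc ((d - 1) * k + 1) (k * d), ((s : ℂ) + (k : ℂ) * ε)) /
          ((d : ℂ) + ε) ^ N := by
  refine ⟨1, one_pos, fun ε hε => ?_⟩
  have hεn : ‖ε‖ < 1 := hε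
  set u : ℂ := (d:ℂ) - 1 + ε with hu
  set v : ℂ := (d:ℂ) + ε with hv
  set m : ℕ := N - k - 1 with hm
  have hvne : v ≠ 0 := by
    have h1 : ‖(d:ℂ)‖ ≤ ‖v‖ + ‖ε‖ := by
      calc ‖(d:ℂ)‖ = ‖v - ε‖ := by rw [hv]; ring_nf
        _ ≤ ‖v‖ + ‖ε‖ := norm_sub_le _ _
    have h2 : ‖(d:ℂ)‖ = (d:ℝ) := by
      rw [Complex.norm_natCast]
    intro h0
    rw [h0, norm_zero, zero_add, h2] at h1
    have : (2:ℝ) ≤ d := by exact_mod_cast hd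
    linarith
  -- Step 1: inner residue
  have step1 : Fdm1 N k d ε =
      resAt (fun zd => zd ^ (-(N:ℤ)) *
        ((u * zd / v) ^ m *
          ∏ j ∈ Finset.range k, (((k:ℂ) - ((j:ℂ)+1)) * (u * zd / v) + ((j:ℂ)+1) * zd))) 0 := by
    rw [Fdm1]
    congr 1
    funext zd
    rw [inner_eval N k hk hkN zd (u * zd / v)]
  rw [step1]
  -- Step 2: outer residue
  set A : ℂ := (u/v) ^ m *
      ∏ j ∈ Finset.range k, (((k:ℂ) - ((j:ℂ)+1)) * (u/v) + ((j:ℂ)+1)) with hA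
  have step2 : resAt (fun zd => zd ^ (-(N:ℤ)) *
      ((u * zd / v) ^ m *
        ∏ j ∈ Finset.range k, (((k:ℂ) - ((j:ℂ)+1)) * (u * zd / v) + ((j:ℂ)+1) * zd))) 0 = A := by
    refine resAt_eq (fun _ => A) (differentiable_const _) _ _ fun zd hzd => ?_
    rw [sub_zero]
    have e1 : u * zd / v = (u/v) * zd := by ring
    have e2 : (∏ j ∈ Finset.range k,
        (((k:ℂ) - ((j:ℂ)+1)) * ((u/v) * zd) + ((j:ℂ)+1) * zd))
        = zd ^ k * ∏ j ∈ Finset.range k, (((k:ℂ) - ((j:ℂ)+1)) * (u/v) + ((j:ℂ)+1)) := by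
      calc ∏ j ∈ Finset.range k, (((k:ℂ) - ((j:ℂ)+1)) * ((u/v) * zd) + ((j:ℂ)+1) * zd)
          = ∏ j ∈ Finset.range k, (zd * (((k:ℂ) - ((j:ℂ)+1)) * (u/v) + ((j:ℂ)+1))) :=
            Finset.prod_congr rfl fun j _ => by ring
        _ = (∏ _j ∈ Finset.range k, zd) *
            ∏ j ∈ Finset.range k, (((k:ℂ) - ((j:ℂ)+1)) * (u/v) + ((j:ℂ)+1)) :=
            Finset.prod_mul_distrib
        _ = zd ^ k * ∏ j ∈ Finset.range k, (((k:ℂ) - ((j:ℂ)+1)) * (u/v) + ((j:ℂ)+1)) := by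
            rw [Finset.prod_const, Finset.card_range]
    rw [e1, e2, mul_pow]
    have hz3 : zd ^ (-(N:ℤ)) * zd ^ m * zd ^ k = zd⁻¹ := by
      rw [← zpow_natCast zd m, ← zpow_natCast zd k, ← zpow_add₀ hzd, ← zpow_add₀ hzd,
        show -(N:ℤ) + m + k = -1 from by omega, zpow_neg_one]
    calc zd ^ (-(N:ℤ)) * ((u/v)^m * zd^m *
          (zd^k * ∏ j ∈ Finset.range k, (((k:ℂ) - ((j:ℂ)+1)) * (u/v) + ((j:ℂ)+1))))
        = (zd ^ (-(N:ℤ)) * zd ^ m * zd ^ k) *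
          ((u/v)^m * ∏ j ∈ Finset.range k, (((k:ℂ) - ((j:ℂ)+1)) * (u/v) + ((j:ℂ)+1))) := by
          ring
      _ = A / zd := by rw [hz3, hA, div_eq_mul_inv]; ring
  rw [step2, hA]
  -- Step 3: final algebra
  have hterm : ∀ j : ℕ, ((k:ℂ) - ((j:ℂ)+1)) * (u/v) + ((j:ℂ)+1)
      = ((k:ℂ) * ((d:ℂ) - 1) + ((j:ℂ)+1) + (k:ℂ) * ε) / v := by
    intro j
    rw [hu, hv]
    field_simp [show (d:ℂ) + ε ≠ 0 from hvne]
    ring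
  have hdk : (d-1)*k + k = k*d := by
    cases d with
    | zero => omega
    | succ n => simp only [Nat.succ_sub_one]; ring
  have hcard : k*d + 1 - ((d-1)*k + 1) = k := by
    rw [← hdk]; generalize (d-1)*k = p; omega
  have hprod : (∏ s ∈ Finset.Icc ((d - 1) * k + 1) (k * d), ((s : ℂ) + (k : ℂ) * ε))
      = ∏ j ∈ Finset.range k, ((k:ℂ) * ((d:ℂ) - 1) + ((j:ℂ)+1) + (k:ℂ) * ε) := by
    rw [← Finset.Ico_add_one_right_eq_Icc, Finset.prod_Ico_eq_prod_range, hcard]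
    refine Finset.prod_congr rfl fun j _ => ?_
    push_cast [Nat.cast_sub (show 1 ≤ d by omega)]
    ring
  rw [hprod]
  simp_rw [hterm]
  rw [Finset.prod_div_distrib, Finset.prod_const, Finset.card_range,
    show ((N:ℤ) - (k:ℤ) - 1) = (m : ℤ) from by omega, zpow_natCast, div_pow]
  have hvN : v ^ N = v ^ m * v ^ k * v := by
    rw [← pow_add, ← pow_succ]
    congr 1
    omega
  rw [hvN]
  field_simp
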